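/- arXiv:2109.00944 — 2 statements merged into one kernel-verified Lean document; each statement's English description precedes it below -/
import Mathlib

section
/- Let Φ be an irreducible crystallographic root system, S ⊆ Π, and β ∈ Φ⁺ with supp(β) ∩ S ≠ ∅. Then both {min Φ_{S,β}} ∪ (Π \ S) and {−max Φ_{S,β}} ∪ (Π \ S) are simple systems of the root subsystem Φ_{S,ℤβ}; in particular min Φ_{S,β} and max Φ_{S,β} have the same length. -/
open scoped RealInnerProductSpace
attribute [local instance] Classical.propDecidable

variable {E : Type*} [NormedAddCommGroup E] [InnerProductSpace ℝ E] [FiniteDimensional ℝ E]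

/-- A finite reduced crystallographic root system spanning `E`. -/
structure IsRootSystem (Φ : Finset E) : Prop where
  nonzero : ∀ γ ∈ Φ, γ ≠ (0 : E)
  span_top : Submodule.span ℝ (Φ : Set E) = ⊤
  reduced : ∀ γ ∈ Φ, ∀ t : ℝ, t • γ ∈ Φ → t = 1 ∨ t = -1
  reflect : ∀ γ ∈ Φ, ∀ δ ∈ Φ, δ - (2 * ⟪δ, γ⟫ / ⟪γ, γ⟫) • γ ∈ Φ
  cry : ∀ γ ∈ Φ, ∀ δ ∈ Φ, ∃ n : ℤ, 2 * ⟪δ, γ⟫ / ⟪γ, γ⟫ = (n : ℝ)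

/-- `Δ` is a simple system (base) for `Φ`, and `c γ a` is the coordinate of `γ`
on the simple root `a`. -/
structure IsBase (Φ Δ : Finset E) (c : E → E → ℝ) : Prop where
  subset : Δ ⊆ Φ
  indep : LinearIndependent ℝ (fun x : (Δ : Set E) => (x : E))
  repr : ∀ γ ∈ Φ, γ = ∑ a ∈ Δ, c γ a • a
  int : ∀ γ ∈ Φ, ∀ a ∈ Δ, ∃ n : ℤ, c γ a = (n : ℝ)
  sign : ∀ γ ∈ Φ, (∀ a ∈ Δ, 0 ≤ c γ a) ∨ (∀ a ∈ Δ, c γ a ≤ 0)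

/-- Irreducibility: no splitting into two nonempty mutually orthogonal parts. -/
def IsIrredSys (Φ : Finset E) : Prop :=
  ∀ s : Set E, s ⊆ (Φ : Set E) → (∀ x ∈ s, ∀ y ∈ (Φ : Set E) \ s, ⟪x, y⟫ = 0) →
    s = ∅ ∨ s = (Φ : Set E)

/-- `Φ_{S,β}`: roots whose coordinates on every simple root of `S` agree with those of `β`. -/
def lev (Φ : Finset E) (c : E → E → ℝ) (S : Finset E) (β : E) : Set E :=
  {γ | γ ∈ Φ ∧ ∀ a ∈ S, c γ a = c β a}

/-- `Φ_{S,ℤβ}`: roots whose coordinates on `S` are a common integer multiple of those of `β`. -/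
def levZ (Φ : Finset E) (c : E → E → ℝ) (S : Finset E) (β : E) : Set E :=
  {γ | γ ∈ Φ ∧ ∃ k : ℤ, ∀ a ∈ S, c γ a = (k : ℝ) * c β a}

/-- The root-poset order: `x ≤ y` iff `y - x` is a nonnegative linear combination of
positive roots. -/
def rootLe (Φ Δ : Finset E) (c : E → E → ℝ) (x y : E) : Prop :=
  ∃ f : E → ℝ, (∀ γ, 0 ≤ f γ) ∧
    y - x = ∑ γ ∈ Φ.filter (fun γ => ∀ a ∈ Δ, 0 ≤ c γ a), f γ • γ

/-- `B` is a simple system of the (sub)system `Ψ`: a linearly independent subset such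
that every element of `Ψ` is an integral linear combination of `B` with coefficients
all nonnegative or all nonpositive. -/
def IsSimpleSystem (Ψ : Set E) (B : Finset E) : Prop :=
  (B : Set E) ⊆ Ψ ∧ LinearIndependent ℝ (fun x : (B : Set E) => (x : E)) ∧
    ∀ γ ∈ Ψ, ∃ f : E → ℤ, γ = ∑ b ∈ B, (f b : ℝ) • b ∧
      ((∀ b ∈ B, 0 ≤ f b) ∨ (∀ b ∈ B, f b ≤ 0))

/-!
Extend `c` linearly to coordinate functions `d` dual to `Δ`. Reflections in the simple roots of
`Δ \ S` preserve lengths and the coordinates on `S`, and lower the height of a root until it is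
antidominant for `Δ \ S`. Hence the minimum `m` of `Φ_{S,β}` is antidominant, and for the
antidominant representative `x` of any `γ ∈ Φ_{S,β}` the difference `x - m ≥ 0` is supported on
`Δ \ S`, so `‖m‖² = ‖x‖² - 2⟪x, x - m⟫ + ‖x - m‖² ≥ ‖γ‖²`.

Every root `γ` of level `k ≥ 1` satisfies `k • m ≤ γ` coordinatewise, by induction on `k`: the
antidominant representative `x` of `γ` has `⟪x, m⟫ > 0`, since otherwise splitting
`x - k • m ∈ span (Δ \ S)` into positive and negative parts gives a vector of nonpositive square
(simple roots are pairwise obtuse), which forces `k • m ∈ span (Δ \ S)`; so `x - m` is a root of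
level `k - 1`. This is the sign condition for `{m} ∪ (Δ \ S)` in positive levels, negation
handles negative levels, and level `0` is the sign property of `Δ`. Since `-M` is the minimum of
`Φ_{S,-β} = -Φ_{S,β}`, all of this applies to `-M` as well.
-/

theorem Finset.induction_on_measure {ι α : Type*} [LinearOrder α] (s : Finset ι) (f : ι → α)
    {p : ι → Prop} (h : ∀ i ∈ s, (∀ j ∈ s, f j < f i → p j) → p i) : ∀ i ∈ s, p i := by
  by_contra! hs
  obtain ⟨i, hi, hmin⟩ :=
    (s.filter (¬ p ·)).exists_min_image f (by simpa [Finset.Nonempty] using hs)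
  rw [Finset.mem_filter] at hi
  refine hi.2 (h i hi.1 fun j hj hji => ?_)
  by_contra hpj
  exact (hmin j (Finset.mem_filter.2 ⟨hj, hpj⟩)).not_gt hji

section RootSystem

variable {V : Type*} [NormedAddCommGroup V] [InnerProductSpace ℝ V]
  {Φ Δ S : Finset V} {c : V → V → ℝ} {d : V → V →ₗ[ℝ] ℝ} {β m : V}

open Submodule in
theorem mem_span_of_sub_mem_span_of_inner_nonpos {T : Finset V}
    (hT : ∀ u ∈ T, ∀ v ∈ T, u ≠ v → ⟪u, v⟫ ≤ 0) {x y : V} (hxy : ⟪x, y⟫ ≤ 0)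
    (hx : ∀ u ∈ T, ⟪x, u⟫ ≤ 0) (hy : ∀ u ∈ T, ⟪y, u⟫ ≤ 0)
    (h : x - y ∈ span ℝ (T : Set V)) : y ∈ span ℝ (T : Set V) := by
  obtain ⟨e, -, he⟩ := mem_span_finset.1 h
  set p := ∑ u ∈ T, (e u)⁺ • u
  set q := ∑ u ∈ T, (e u)⁻ • u
  have hpq : x + q = y + p := by
    have : x - y = p - q := by
      rw [← he, ← Finset.sum_sub_distrib]
      exact Finset.sum_congr rfl fun u _ => by rw [← sub_smul, posPart_sub_negPart]
    rw [sub_eq_sub_iff_add_eq_add.mp this, add_comm]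
  -- each of the four terms of `⟪x + q, y + p⟫` is `≤ 0`
  have hxp : ⟪x, p⟫ ≤ 0 := by
    rw [inner_sum]
    exact Finset.sum_nonpos fun u hu => by
      rw [real_inner_smul_right]; exact mul_nonpos_of_nonneg_of_nonpos (posPart_nonneg _) (hx u hu)
  have hqy : ⟪q, y⟫ ≤ 0 := by
    rw [sum_inner]
    exact Finset.sum_nonpos fun u hu => by
      rw [real_inner_smul_left, real_inner_comm]
      exact mul_nonpos_of_nonneg_of_nonpos (negPart_nonneg _) (hy u hu)
  have hqp : ⟪q, p⟫ ≤ 0 := by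
    simp only [p, q, sum_inner, inner_sum, real_inner_smul_left, real_inner_smul_right]
    refine Finset.sum_nonpos fun u hu => Finset.sum_nonpos fun v hv => ?_
    rcases eq_or_ne u v with rfl | huv
    · rcases le_total (e u) 0 with he | he
      · simp [posPart_eq_zero.2 he]
      · simp [negPart_eq_zero.2 he]
    · exact mul_nonpos_of_nonneg_of_nonpos (posPart_nonneg _)
        (mul_nonpos_of_nonneg_of_nonpos (negPart_nonneg _) (hT v hv u hu huv.symm))
  have hw : y + p = 0 := by
    rw [← real_inner_self_nonpos, ← hpq]
    nth_rw 2 [hpq]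
    simp only [inner_add_left, inner_add_right]
    linarith
  rw [eq_neg_of_add_eq_zero_left hw]
  exact neg_mem (sum_mem fun u hu => smul_mem _ _ (subset_span hu))
theorem norm_sub_two_mul_inner_div_inner_smul (x u : V) :
    ‖x - (2 * ⟪x, u⟫ / ⟪u, u⟫) • u‖ = ‖x‖ := by
  rcases eq_or_ne u 0 with rfl | hu
  · simp
  have huu : ⟪u, u⟫ ≠ 0 := inner_self_ne_zero.2 hu
  rw [← sq_eq_sq₀ (norm_nonneg _) (norm_nonneg _), norm_sub_sq_real, norm_smul,
    real_inner_smul_right, mul_pow, Real.norm_eq_abs, sq_abs, ← real_inner_self_eq_norm_sq u]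
  field_simp
  ring

theorem IsRootSystem.neg_mem (hΦ : IsRootSystem Φ) {x : V} (hx : x ∈ Φ) : -x ∈ Φ := by
  have hxx : ⟪x, x⟫ ≠ 0 := inner_self_ne_zero.2 (hΦ.nonzero x hx)
  have := hΦ.reflect x hx x hx
  rwa [mul_div_assoc, div_self hxx, mul_one, two_smul, sub_add_cancel_left] at this

theorem IsRootSystem.inner_mul_inner_lt (hΦ : IsRootSystem Φ) {x y : V} (hx : x ∈ Φ)
    (hy : y ∈ Φ) (hxy : 0 < ⟪x, y⟫) (hne : x ≠ y) : ⟪x, y⟫ * ⟪x, y⟫ < ⟪x, x⟫ * ⟪y, y⟫ := by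
  refine (real_inner_mul_inner_self_le x y).lt_of_ne fun heq => hne ?_
  rw [real_inner_self_eq_norm_mul_norm, real_inner_self_eq_norm_mul_norm] at heq
  have hxn : 0 < ‖x‖ := norm_pos_iff.2 (hΦ.nonzero x hx)
  have hyn : 0 < ‖y‖ := norm_pos_iff.2 (hΦ.nonzero y hy)
  have hnorm : ⟪x, y⟫ = ‖x‖ * ‖y‖ := by nlinarith [mul_pos hxn hyn]
  have hyx : y = (‖y‖ / ‖x‖) • x := by
    rw [div_eq_inv_mul, mul_smul, inner_eq_norm_mul_iff_real.1 hnorm, smul_smul,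
      inv_mul_cancel₀ hxn.ne', one_smul]
  rcases hΦ.reduced x hx _ (hyx ▸ hy) with h | h
  · rw [hyx, h, one_smul]
  · have : 0 < ‖y‖ / ‖x‖ := by positivity
    linarith

theorem IsRootSystem.sub_mem_of_inner_pos (hΦ : IsRootSystem Φ) {x y : V} (hx : x ∈ Φ)
    (hy : y ∈ Φ) (hxy : 0 < ⟪x, y⟫) (hne : x ≠ y) : x - y ∈ Φ := by
  obtain ⟨p, hp⟩ := hΦ.cry y hy x hx
  obtain ⟨q, hq⟩ := hΦ.cry x hx y hy
  have hxx : 0 < ⟪x, x⟫ := real_inner_self_pos.2 (hΦ.nonzero x hx)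
  have hyy : 0 < ⟪y, y⟫ := real_inner_self_pos.2 (hΦ.nonzero y hy)
  rw [real_inner_comm] at hq
  have hp1 : 1 ≤ p := by
    have : (0 : ℝ) < p := hp ▸ by positivity
    exact_mod_cast this
  have hq1 : 1 ≤ q := by
    have : (0 : ℝ) < q := hq ▸ by positivity
    exact_mod_cast this
  have hpq : p * q < 4 := by
    have : (p * q : ℝ) = 4 * (⟪x, y⟫ * ⟪x, y⟫) / (⟪x, x⟫ * ⟪y, y⟫) := by
      rw [← hp, ← hq]; field_simp; ring
    have : (p * q : ℝ) < 4 := by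
      rw [this, div_lt_iff₀ (by positivity), mul_lt_mul_iff_right₀ (by norm_num)]
      exact hΦ.inner_mul_inner_lt hx hy hxy hne
    exact_mod_cast this
  -- one of the two Cartan integers is `1`, and the corresponding reflection gives `±(x - y)`
  obtain rfl | rfl : p = 1 ∨ q = 1 := by
    by_contra! h
    nlinarith [lt_of_le_of_ne hp1 h.1.symm, lt_of_le_of_ne hq1 h.2.symm]
  · have := hΦ.reflect y hy x hx
    rwa [hp, Int.cast_one, one_smul] at this
  · have := hΦ.neg_mem (hΦ.reflect x hx y hy)
    rwa [real_inner_comm, hq, Int.cast_one, one_smul, neg_sub] at this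

/-- `d a` is the coordinate function at `a` of the basis `Δ`: it extends `c · a`, which is only
determined on roots, linearly to all of `V`. -/
structure IsDualCoords (Δ : Finset V) (d : V → V →ₗ[ℝ] ℝ) : Prop where
  apply_mem : ∀ a ∈ Δ, ∀ a' ∈ Δ, d a' a = if a' = a then 1 else 0
  sum_smul : ∀ x, ∑ a ∈ Δ, d a x • a = x

open Submodule in
theorem IsBase.exists_isDualCoords (hΦ : IsRootSystem Φ) (hB : IsBase Φ Δ c) :
    ∃ d, IsDualCoords Δ d := by
  have hsp : ⊤ ≤ span ℝ (Set.range fun x : (Δ : Set V) => (x : V)) := by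
    rw [Subtype.range_coe, ← hΦ.span_top, span_le]
    intro γ hγ
    rw [hB.repr γ hγ]
    exact sum_mem fun a ha => smul_mem _ _ (subset_span ha)
  let b := Module.Basis.mk hB.indep hsp
  have hb : ∀ i, b i = i := Module.Basis.mk_apply _ _
  refine ⟨fun a => if h : a ∈ Δ then b.coord ⟨a, h⟩ else 0, fun a ha a' ha' => ?_, fun x => ?_⟩
  · simp only [dif_pos ha', Module.Basis.coord_apply]
    have : b.repr a = Finsupp.single ⟨a, ha⟩ 1 := by simpa [hb] using b.repr_self ⟨a, ha⟩
    rw [this, Finsupp.single_apply]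
    simp [eq_comm]
  · conv_rhs => rw [← b.sum_repr x]
    rw [← Finset.sum_coe_sort Δ]
    simp [hb]

namespace IsDualCoords

theorem apply_eq (hd : IsDualCoords Δ d) (hB : IsBase Φ Δ c) {γ a : V} (hγ : γ ∈ Φ)
    (ha : a ∈ Δ) : d a γ = c γ a := by
  conv_lhs => rw [hB.repr γ hγ]
  rw [map_sum, Finset.sum_eq_single a]
  · simp [hd.apply_mem a ha a ha]
  · intro b hb hba
    simp [hd.apply_mem b hb a ha, Ne.symm hba]
  · exact fun h => absurd ha h

theorem intCast_floor_apply (hd : IsDualCoords Δ d) (hB : IsBase Φ Δ c) {γ a : V} (hγ : γ ∈ Φ)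
    (ha : a ∈ Δ) : (⌊d a γ⌋ : ℝ) = d a γ := by
  obtain ⟨n, hn⟩ := hB.int γ hγ a ha
  rw [hd.apply_eq hB hγ ha, hn, Int.floor_intCast]

theorem ext (hd : IsDualCoords Δ d) {x y : V} (h : ∀ a ∈ Δ, d a x = d a y) : x = y := by
  rw [← hd.sum_smul x, ← hd.sum_smul y]
  exact Finset.sum_congr rfl fun a ha => by rw [h a ha]

theorem sum_sdiff_smul (hd : IsDualCoords Δ d) (hS : S ⊆ Δ) {x : V} (hx : ∀ a ∈ S, d a x = 0) :
    ∑ a ∈ Δ \ S, d a x • a = x := by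
  conv_rhs => rw [← hd.sum_smul x, ← Finset.sum_sdiff hS]
  rw [Finset.sum_eq_zero (s := S) fun a ha => by simp [hx a ha], add_zero]

open Submodule in
theorem mem_span_sdiff_iff (hd : IsDualCoords Δ d) (hS : S ⊆ Δ) {x : V} :
    x ∈ span ℝ ((Δ \ S : Finset V) : Set V) ↔ ∀ a ∈ S, d a x = 0 := by
  refine ⟨fun hx a ha => ?_, fun hx => ?_⟩
  · induction hx using span_induction with
    | mem u hu =>
      obtain ⟨huΔ, huS⟩ := Finset.mem_sdiff.1 hu
      rw [hd.apply_mem u huΔ a (hS ha), if_neg (ne_of_mem_of_not_mem ha huS)]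
    | zero => simp
    | add _ _ _ _ hx hy => simp [hx, hy]
    | smul t _ _ hx => simp [hx]
  · rw [← hd.sum_sdiff_smul hS hx]
    exact sum_mem fun u hu => smul_mem _ _ (subset_span hu)

theorem apply_le_of_rootLe (hd : IsDualCoords Δ d) (hB : IsBase Φ Δ c) {x y a : V}
    (h : rootLe Φ Δ c x y) (ha : a ∈ Δ) : d a x ≤ d a y := by
  obtain ⟨f, hf, hxy⟩ := h
  have : 0 ≤ d a (y - x) := by
    rw [hxy, map_sum]
    refine Finset.sum_nonneg fun γ hγ => ?_
    rw [Finset.mem_filter] at hγ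
    rw [map_smul, smul_eq_mul, hd.apply_eq hB hγ.1 ha]
    exact mul_nonneg (hf γ) (hγ.2 a ha)
  rwa [map_sub, sub_nonneg] at this

theorem exists_antidominant (hd : IsDualCoords Δ d) (hΦ : IsRootSystem Φ) (hΔ : Δ ⊆ Φ)
    {T : Finset V} (hT : T ⊆ Δ) :
    ∀ γ ∈ Φ, ∃ γ' ∈ Φ, ‖γ'‖ = ‖γ‖ ∧ (∀ u ∈ T, ⟪γ', u⟫ ≤ 0) ∧
      (∀ a ∈ Δ, d a γ' ≤ d a γ) ∧ ∀ a ∈ Δ, a ∉ T → d a γ' = d a γ := by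
  refine Φ.induction_on_measure (fun γ => ∑ a ∈ Δ, d a γ) fun γ hγ ih => ?_
  by_cases hanti : ∀ u ∈ T, ⟪γ, u⟫ ≤ 0
  · exact ⟨γ, hγ, rfl, hanti, fun _ _ => le_rfl, fun _ _ _ => rfl⟩
  push Not at hanti
  obtain ⟨u, huT, hγu⟩ := hanti
  have huΔ := hT huT
  set t := 2 * ⟪γ, u⟫ / ⟪u, u⟫
  have ht : 0 < t := by
    have := real_inner_self_pos.2 (hΦ.nonzero u (hΔ huΔ))
    positivity
  have hcoord : ∀ a ∈ Δ, d a (γ - t • u) = d a γ - if a = u then t else 0 := by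
    intro a ha
    rw [map_sub, map_smul, hd.apply_mem u huΔ a ha]
    split_ifs <;> simp
  have hlt : ∑ a ∈ Δ, d a (γ - t • u) < ∑ a ∈ Δ, d a γ := by
    rw [Finset.sum_congr rfl hcoord, Finset.sum_sub_distrib, Finset.sum_ite_eq' Δ u, if_pos huΔ]
    linarith
  obtain ⟨γ', hγ', hnorm, hT', hle, heq⟩ := ih _ (hΦ.reflect u (hΔ huΔ) γ hγ) hlt
  refine ⟨γ', hγ', hnorm.trans (norm_sub_two_mul_inner_div_inner_smul γ u), hT',
    fun a ha => ?_, fun a ha haT => ?_⟩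
  · have := hcoord a ha
    split_ifs at this <;> linarith [hle a ha]
  · rw [heq a ha haT, hcoord a ha, if_neg fun (h : a = u) => haT (h ▸ huT), sub_zero]

end IsDualCoords

theorem IsBase.inner_nonpos (hΦ : IsRootSystem Φ) (hB : IsBase Φ Δ c) {a b : V} (ha : a ∈ Δ)
    (hb : b ∈ Δ) (hab : a ≠ b) : ⟪a, b⟫ ≤ 0 := by
  obtain ⟨d, hd⟩ := hB.exists_isDualCoords hΦ
  by_contra! h
  have hmem := hΦ.sub_mem_of_inner_pos (hB.subset ha) (hB.subset hb) h hab
  have hda : c (a - b) a = 1 := by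
    rw [← hd.apply_eq hB hmem ha, map_sub, hd.apply_mem a ha a ha, hd.apply_mem b hb a ha,
      if_neg hab, if_pos rfl, sub_zero]
  have hdb : c (a - b) b = -1 := by
    rw [← hd.apply_eq hB hmem hb, map_sub, hd.apply_mem a ha b hb, hd.apply_mem b hb b hb,
      if_neg (Ne.symm hab), if_pos rfl, zero_sub]
  rcases hB.sign _ hmem with hpos | hneg
  · linarith [hpos b hb]
  · linarith [hneg a ha]

/-- Roots of level `1` form `Φ_{S,β}`, roots of integer level form `Φ_{S,ℤβ}`. -/
def HasLevel (d : V → V →ₗ[ℝ] ℝ) (S : Finset V) (β : V) (k : ℝ) (x : V) : Prop :=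
  ∀ a ∈ S, d a x = k * d a β

section HasLevel

variable {k l : ℝ} {x y : V}

theorem HasLevel.sub (hx : HasLevel d S β k x) (hy : HasLevel d S β l y) :
    HasLevel d S β (k - l) (x - y) := fun a ha => by
  rw [map_sub, hx a ha, hy a ha]; ring

theorem HasLevel.smul (hx : HasLevel d S β k x) (t : ℝ) : HasLevel d S β (t * k) (t • x) :=
  fun a ha => by rw [map_smul, hx a ha, smul_eq_mul, mul_assoc]

theorem hasLevel_neg_iff : HasLevel d S (-β) k x ↔ HasLevel d S β (-k) x := by
  simp [HasLevel]

theorem HasLevel.unique (hx : HasLevel d S β k x) (hx' : HasLevel d S β l x)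
    (hβ : ∃ a ∈ S, d a β ≠ 0) : k = l := by
  obtain ⟨a, ha, hβa⟩ := hβ
  exact mul_right_cancel₀ hβa ((hx a ha).symm.trans (hx' a ha))

end HasLevel

theorem mem_lev_iff (hd : IsDualCoords Δ d) (hB : IsBase Φ Δ c) (hS : S ⊆ Δ) (hβ : β ∈ Φ)
    {γ : V} : γ ∈ lev Φ c S β ↔ γ ∈ Φ ∧ HasLevel d S β 1 γ := by
  refine and_congr_right fun hγ => forall₂_congr fun a ha => ?_
  rw [hd.apply_eq hB hγ (hS ha), hd.apply_eq hB hβ (hS ha), one_mul]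

theorem mem_levZ_iff (hd : IsDualCoords Δ d) (hB : IsBase Φ Δ c) (hS : S ⊆ Δ) (hβ : β ∈ Φ)
    {γ : V} : γ ∈ levZ Φ c S β ↔ γ ∈ Φ ∧ ∃ k : ℤ, HasLevel d S β k γ := by
  refine and_congr_right fun hγ => exists_congr fun k => forall₂_congr fun a ha => ?_
  rw [hd.apply_eq hB hγ (hS ha), hd.apply_eq hB hβ (hS ha)]

theorem levZ_neg (hΦ : IsRootSystem Φ) (hB : IsBase Φ Δ c) (hS : S ⊆ Δ) (hβ : β ∈ Φ) :
    levZ Φ c S (-β) = levZ Φ c S β := by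
  obtain ⟨d, hd⟩ := hB.exists_isDualCoords hΦ
  ext γ
  rw [mem_levZ_iff hd hB hS (hΦ.neg_mem hβ), mem_levZ_iff hd hB hS hβ]
  refine and_congr_right fun _ => ⟨fun ⟨k, hk⟩ => ⟨-k, ?_⟩, fun ⟨k, hk⟩ => ⟨-k, ?_⟩⟩
  · simpa using hasLevel_neg_iff.1 hk
  · simpa [hasLevel_neg_iff] using hk

structure IsLevelMin (Φ Δ : Finset V) (d : V → V →ₗ[ℝ] ℝ) (S : Finset V) (β m : V) : Prop where
  mem : m ∈ Φ
  hasLevel : HasLevel d S β 1 m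
  le : ∀ γ ∈ Φ, HasLevel d S β 1 γ → ∀ a ∈ Δ, d a m ≤ d a γ

namespace IsDualCoords

theorem isLevelMin_of_rootLe (hd : IsDualCoords Δ d) (hB : IsBase Φ Δ c) (hS : S ⊆ Δ)
    (hβ : β ∈ Φ) {m : V} (hm : m ∈ lev Φ c S β ∧ ∀ γ ∈ lev Φ c S β, rootLe Φ Δ c m γ) :
    IsLevelMin Φ Δ d S β m := by
  obtain ⟨hmΦ, hm1⟩ := (mem_lev_iff hd hB hS hβ).1 hm.1
  exact ⟨hmΦ, hm1, fun γ hγ hγ1 a ha =>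
    hd.apply_le_of_rootLe hB (hm.2 γ ((mem_lev_iff hd hB hS hβ).2 ⟨hγ, hγ1⟩)) ha⟩

theorem isLevelMin_neg_of_rootLe (hd : IsDualCoords Δ d) (hΦ : IsRootSystem Φ)
    (hB : IsBase Φ Δ c) (hS : S ⊆ Δ) (hβ : β ∈ Φ) {M : V}
    (hM : M ∈ lev Φ c S β ∧ ∀ γ ∈ lev Φ c S β, rootLe Φ Δ c γ M) :
    IsLevelMin Φ Δ d S (-β) (-M) := by
  obtain ⟨hMΦ, hM1⟩ := (mem_lev_iff hd hB hS hβ).1 hM.1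
  refine ⟨hΦ.neg_mem hMΦ, by simpa [hasLevel_neg_iff] using hM1.smul (-1), fun γ hγ hγ1 a ha => ?_⟩
  have hγ' : -γ ∈ lev Φ c S β :=
    (mem_lev_iff hd hB hS hβ).2 ⟨hΦ.neg_mem hγ, by simpa using (hasLevel_neg_iff.1 hγ1).smul (-1)⟩
  have := hd.apply_le_of_rootLe hB (hM.2 _ hγ') ha
  rw [map_neg] at this ⊢
  linarith

end IsDualCoords

namespace IsLevelMin

theorem inner_nonpos (hm : IsLevelMin Φ Δ d S β m) (hΦ : IsRootSystem Φ) (hΔ : Δ ⊆ Φ)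
    (hd : IsDualCoords Δ d) (hS : S ⊆ Δ) {u : V} (hu : u ∈ Δ \ S) : ⟪m, u⟫ ≤ 0 := by
  obtain ⟨m', hm', -, hanti, hle, heq⟩ :=
    hd.exists_antidominant hΦ hΔ Finset.sdiff_subset m hm.mem
  have hm'1 : HasLevel d S β 1 m' := fun a ha => by
    rw [heq a (hS ha) (Finset.notMem_sdiff_of_mem_right ha), hm.hasLevel a ha]
  obtain rfl : m' = m := hd.ext fun a ha => (hle a ha).antisymm (hm.le m' hm' hm'1 a ha)
  exact hanti u hu

theorem norm_le (hm : IsLevelMin Φ Δ d S β m) (hΦ : IsRootSystem Φ) (hΔ : Δ ⊆ Φ)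
    (hd : IsDualCoords Δ d) (hS : S ⊆ Δ) {γ : V} (hγ : γ ∈ Φ) (hγ1 : HasLevel d S β 1 γ) :
    ‖γ‖ ≤ ‖m‖ := by
  obtain ⟨x, hx, hnorm, hanti, -, heq⟩ := hd.exists_antidominant hΦ hΔ Finset.sdiff_subset γ hγ
  have hx1 : HasLevel d S β 1 x := fun a ha => by
    rw [heq a (hS ha) (Finset.notMem_sdiff_of_mem_right ha), hγ1 a ha]
  -- `x - m` is a nonnegative combination of `Δ \ S`, on which `x` is antidominant
  have hinner : ⟪x, x - m⟫ ≤ 0 := by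
    rw [← hd.sum_smul (x - m), inner_sum]
    refine Finset.sum_nonpos fun a ha => ?_
    rw [real_inner_smul_right, map_sub]
    by_cases haS : a ∈ S
    · rw [hx1 a haS, hm.hasLevel a haS, sub_self, zero_mul]
    · exact mul_nonpos_of_nonneg_of_nonpos (sub_nonneg.2 (hm.le x hx hx1 a ha))
        (hanti a (Finset.mem_sdiff.2 ⟨ha, haS⟩))
  have hsq : ‖m‖ ^ 2 = ‖x‖ ^ 2 - 2 * ⟪x, x - m⟫ + ‖x - m‖ ^ 2 := by
    rw [← norm_sub_sq_real, sub_sub_cancel]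
  rw [← hnorm, ← sq_le_sq₀ (norm_nonneg _) (norm_nonneg _)]
  nlinarith [sq_nonneg ‖x - m‖]

theorem inner_pos (hm : IsLevelMin Φ Δ d S β m) (hΦ : IsRootSystem Φ) (hB : IsBase Φ Δ c)
    (hd : IsDualCoords Δ d) (hS : S ⊆ Δ) (hβS : ∃ a ∈ S, d a β ≠ 0) {k : ℝ} (hk : 0 < k)
    {x : V} (hx : HasLevel d S β k x) (hanti : ∀ u ∈ Δ \ S, ⟪x, u⟫ ≤ 0) : 0 < ⟪x, m⟫ := by
  by_contra! hxm
  have hmem := mem_span_of_sub_mem_span_of_inner_nonpos (T := Δ \ S) (x := x) (y := k • m)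
    (fun u hu v hv huv => hB.inner_nonpos hΦ (Finset.sdiff_subset hu) (Finset.sdiff_subset hv) huv)
    (by rw [real_inner_smul_right]; exact mul_nonpos_of_nonneg_of_nonpos hk.le hxm) hanti
    (fun u hu => by
      rw [real_inner_smul_left]
      exact mul_nonpos_of_nonneg_of_nonpos hk.le (hm.inner_nonpos hΦ hB.subset hd hS hu))
    ((hd.mem_span_sdiff_iff hS).2 fun a ha => by simpa using (hx.sub (hm.hasLevel.smul k)) a ha)
  have h0 : HasLevel d S β 0 (k • m) := fun a ha => by
    simpa using (hd.mem_span_sdiff_iff hS).1 hmem a ha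
  simpa [hk.ne'] using (hm.hasLevel.smul k).unique h0 hβS

theorem smul_apply_le (hm : IsLevelMin Φ Δ d S β m) (hΦ : IsRootSystem Φ) (hB : IsBase Φ Δ c)
    (hd : IsDualCoords Δ d) (hS : S ⊆ Δ) (hβS : ∃ a ∈ S, d a β ≠ 0) {k : ℤ} (hk : 1 ≤ k) :
    ∀ γ ∈ Φ, HasLevel d S β k γ → ∀ a ∈ Δ, k * d a m ≤ d a γ := by
  induction k, hk using Int.leInduction with
  | base => exact fun γ hγ hγ1 a ha => by simpa using hm.le γ hγ (by simpa using hγ1) a ha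
  | succ k hk ih =>
    intro γ hγ hγk a ha
    obtain ⟨x, hx, -, hanti, hle, heq⟩ :=
      hd.exists_antidominant hΦ hB.subset Finset.sdiff_subset γ hγ
    have hxk : HasLevel d S β (k + 1 : ℤ) x := fun a ha => by
      rw [heq a (hS ha) (Finset.notMem_sdiff_of_mem_right ha), hγk a ha]
    have hpos := hm.inner_pos hΦ hB hd hS hβS (by positivity) hxk hanti
    have hne : x ≠ m := by
      rintro rfl
      have : k + 1 = 1 := by exact_mod_cast hxk.unique hm.hasLevel hβS
      omega
    have hsub := ih (x - m) (hΦ.sub_mem_of_inner_pos hx hm.mem hpos hne)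
      (by simpa using hxk.sub hm.hasLevel) a ha
    rw [map_sub] at hsub
    push_cast
    linarith [hle a ha]

theorem apply_sub_smul_nonneg_or_nonpos (hm : IsLevelMin Φ Δ d S β m) (hΦ : IsRootSystem Φ)
    (hB : IsBase Φ Δ c) (hd : IsDualCoords Δ d) (hS : S ⊆ Δ) (hβS : ∃ a ∈ S, d a β ≠ 0)
    {γ : V} (hγ : γ ∈ Φ) {k : ℤ} (hγk : HasLevel d S β k γ) :
    (0 ≤ k ∧ ∀ b ∈ Δ \ S, 0 ≤ d b γ - k * d b m) ∨
      (k ≤ 0 ∧ ∀ b ∈ Δ \ S, d b γ - k * d b m ≤ 0) := by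
  rcases lt_trichotomy k 0 with hk | rfl | hk
  · refine Or.inr ⟨hk.le, fun b hb => ?_⟩
    have := hm.smul_apply_le hΦ hB hd hS hβS (k := -k) (by omega) (-γ) (hΦ.neg_mem hγ)
      (by simpa using hγk.smul (-1)) b (Finset.sdiff_subset hb)
    rw [map_neg] at this
    push_cast at this
    linarith
  · refine (hB.sign γ hγ).imp (fun h => ⟨le_rfl, fun b hb => ?_⟩)
      (fun h => ⟨le_rfl, fun b hb => ?_⟩) <;>
    simpa [hd.apply_eq hB hγ (Finset.sdiff_subset hb)] using h b (Finset.sdiff_subset hb)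
  · exact Or.inl ⟨hk.le, fun b hb => sub_nonneg.2 <|
      hm.smul_apply_le hΦ hB hd hS hβS hk γ hγ hγk b (Finset.sdiff_subset hb)⟩

open Submodule in
theorem isSimpleSystem (hm : IsLevelMin Φ Δ d S β m) (hΦ : IsRootSystem Φ) (hB : IsBase Φ Δ c)
    (hd : IsDualCoords Δ d) (hS : S ⊆ Δ) (hβ : β ∈ Φ) (hβS : ∃ a ∈ S, d a β ≠ 0) :
    IsSimpleSystem (levZ Φ c S β) (insert m (Δ \ S)) := by
  have hmT : m ∉ span ℝ ((Δ \ S : Finset V) : Set V) := fun h => by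
    have h0 : HasLevel d S β 0 m := fun a ha => by
      simpa using (hd.mem_span_sdiff_iff hS).1 h a ha
    exact one_ne_zero (hm.hasLevel.unique h0 hβS)
  have hmT' : m ∉ Δ \ S := fun h => hmT (subset_span h)
  refine ⟨fun b hb => ?_, ?_, fun γ hγ => ?_⟩
  · rw [Finset.coe_insert, Set.mem_insert_iff] at hb
    rw [mem_levZ_iff hd hB hS hβ]
    rcases hb with rfl | hb
    · exact ⟨hm.mem, 1, by simpa using hm.hasLevel⟩
    · obtain ⟨hbΔ, hbS⟩ := Finset.mem_sdiff.1 hb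
      refine ⟨hB.subset hbΔ, 0, fun a ha => ?_⟩
      rw [hd.apply_mem b hbΔ a (hS ha), if_neg (ne_of_mem_of_not_mem ha hbS), Int.cast_zero,
        zero_mul]
  · rw [Finset.coe_insert]
    have hindep : LinearIndepOn ℝ id (Δ : Set V) := hB.indep
    exact (hindep.mono (Finset.coe_subset.2 Finset.sdiff_subset)).id_insert hmT
  obtain ⟨hγΦ, k, hγk⟩ := (mem_levZ_iff hd hB hS hβ).1 hγ
  have hsign := hm.apply_sub_smul_nonneg_or_nonpos hΦ hB hd hS hβS hγΦ hγk
  let f : V → ℤ := fun b => if b = m then k else ⌊d b γ⌋ - k * ⌊d b m⌋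
  have hf : ∀ b ∈ Δ \ S, (f b : ℝ) = d b γ - k * d b m := fun b hb => by
    have hbΔ := Finset.sdiff_subset hb
    simp [f, show b ≠ m by rintro rfl; exact hmT' hb, hd.intCast_floor_apply hB hγΦ hbΔ,
      hd.intCast_floor_apply hB hm.mem hbΔ]
  refine ⟨f, ?_, ?_⟩
  · have hrest : ∑ b ∈ Δ \ S, (f b : ℝ) • b = γ - (k : ℝ) • m := by
      rw [← hd.sum_sdiff_smul hS (x := γ - (k : ℝ) • m) fun a ha => by
        simpa using (hγk.sub (hm.hasLevel.smul k)) a ha]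
      exact Finset.sum_congr rfl fun b hb => by rw [hf b hb, map_sub, map_smul, smul_eq_mul]
    rw [Finset.sum_insert hmT', hrest]
    simp [f]
  · rcases hsign with ⟨hk, h⟩ | ⟨hk, h⟩ <;> [left; right] <;>
    refine (Finset.forall_mem_insert _ _ _).2 ⟨by simpa [f] using hk, fun b hb => ?_⟩ <;>
    exact_mod_cast (hf b hb).symm ▸ h b hb

end IsLevelMin

end RootSystem

theorem stmt6_general (Φ Δ : Finset E) (c : E → E → ℝ)
    (hΦ : IsRootSystem Φ) (hB : IsBase Φ Δ c)
    (S : Finset E) (hS : S ⊆ Δ) (β : E) (hβ : β ∈ Φ)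
    (hsupp : ∃ a ∈ S, c β a ≠ 0)
    (m M : E)
    (hm : m ∈ lev Φ c S β ∧ ∀ γ ∈ lev Φ c S β, rootLe Φ Δ c m γ)
    (hM : M ∈ lev Φ c S β ∧ ∀ γ ∈ lev Φ c S β, rootLe Φ Δ c γ M) :
    IsSimpleSystem (levZ Φ c S β) (insert m (Δ \ S)) ∧
    IsSimpleSystem (levZ Φ c S β) (insert (-M) (Δ \ S)) ∧
    ‖m‖ = ‖M‖ := by
  obtain ⟨d, hd⟩ := hB.exists_isDualCoords hΦ
  have hβS : ∃ a ∈ S, d a β ≠ 0 := by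
    obtain ⟨a, ha, hβa⟩ := hsupp
    exact ⟨a, ha, by rwa [hd.apply_eq hB hβ (hS ha)]⟩
  have hmin := hd.isLevelMin_of_rootLe hB hS hβ hm
  have hmax := hd.isLevelMin_neg_of_rootLe hΦ hB hS hβ hM
  refine ⟨hmin.isSimpleSystem hΦ hB hd hS hβ hβS, ?_, le_antisymm ?_ ?_⟩
  · rw [← levZ_neg hΦ hB hS hβ]
    exact hmax.isSimpleSystem hΦ hB hd hS (hΦ.neg_mem hβ) (by simpa using hβS)
  · simpa using hmax.norm_le hΦ hB.subset hd hS (hΦ.neg_mem hmin.mem)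
      (by simpa [hasLevel_neg_iff] using hmin.hasLevel.smul (-1))
  · obtain ⟨hMΦ, hM1⟩ := (mem_lev_iff hd hB hS hβ).1 hM.1
    exact hmin.norm_le hΦ hB.subset hd hS hMΦ hM1

/-- Both `{min Φ_{S,β}} ∪ (Π \ S)` and `{-max Φ_{S,β}} ∪ (Π \ S)` are simple systems
of the root subsystem `Φ_{S,ℤβ}`; in particular the minimum and the maximum of
`Φ_{S,β}` have the same length. -/
theorem stmt6 (Φ Δ : Finset E) (c : E → E → ℝ)
    (hΦ : IsRootSystem Φ) (hB : IsBase Φ Δ c) (hirr : IsIrredSys Φ)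
    (S : Finset E) (hS : S ⊆ Δ) (β : E) (hβ : β ∈ Φ)
    (hβpos : ∀ a ∈ Δ, 0 ≤ c β a) (hsupp : ∃ a ∈ S, c β a ≠ 0)
    (m M : E)
    (hm : m ∈ lev Φ c S β ∧ ∀ γ ∈ lev Φ c S β, rootLe Φ Δ c m γ)
    (hM : M ∈ lev Φ c S β ∧ ∀ γ ∈ lev Φ c S β, rootLe Φ Δ c γ M) :
    IsSimpleSystem (levZ Φ c S β) (insert m (Δ \ S)) ∧
    IsSimpleSystem (levZ Φ c S β) (insert (-M) (Δ \ S)) ∧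
    ‖m‖ = ‖M‖ :=
  stmt6_general Φ Δ c hΦ hB S hS β hβ hsupp m M hm hM
end

section
/- (Oshima's Lemma) Let Φ be an irreducible crystallographic root system, S ⊆ Π, β ∈ Φ⁺ with supp(β) ∩ S ≠ ∅. Then the parabolic subgroup W⟨Π\S⟩ acts transitively on the set of long roots in Φ_{S,β} and transitively on the set of short roots in Φ_{S,β}. -/
open scoped RealInnerProductSpace
attribute [local instance] Classical.propDecidable

variable {E : Type*} [NormedAddCommGroup E] [InnerProductSpace ℝ E] [FiniteDimensional ℝ E]

/-- The reflection through the hyperplane orthogonal to `γ`. -/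
noncomputable def sref (γ : E) : E ≃ₗᵢ[ℝ] E := Submodule.reflection (Submodule.span ℝ {γ})ᗮ

/-- The Weyl group, generated by the reflections in the roots. -/
noncomputable def weyl (Φ : Finset E) : Subgroup (E ≃ₗᵢ[ℝ] E) :=
  Subgroup.closure {g | ∃ γ ∈ Φ, g = sref γ}

set_option linter.unusedSectionVars false

/-! Reflecting a root `γ ∈ Φ_{S,β}` in a simple root `a ∈ Δ \ S` with `⟪γ, a⟫ > 0` stays in
`Φ_{S,β}` and lowers the height on `Δ \ S`, so every root of `Φ_{S,β}` is `W⟨Δ \ S⟩`-conjugate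
to one with `⟪γ, a⟫ ≤ 0` for all `a ∈ Δ \ S`. Two such roots `x ≠ y` of the same length cannot
exist: `x - y` lies in the span `U` of `Δ \ S` while `x ∉ U` (as `supp β` meets `S`); since
`Δ \ S` is pairwise obtuse, the projections of `x` and `y` to `U` have nonnegative inner product,
so `⟪x, y⟫ > 0` and `x - y` is a root supported on `Δ \ S`. Being positive or negative, it
contradicts `⟪x, x - y⟫ = ‖x - y‖² / 2 > 0` or `⟪y, y - x⟫ > 0`. -/

lemma sref_apply (γ x : E) : sref γ x = x - (2 * ⟪x, γ⟫ / ⟪γ, γ⟫) • γ := by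
  rw [sref, Submodule.reflection_orthogonal_apply, Submodule.reflection_singleton_apply,
    real_inner_self_eq_norm_sq, real_inner_comm]
  simp only [RCLike.ofReal_real_eq_id, id_eq]
  module

/-- The positive part `w` of a combination `v` of `T` satisfies
`‖w‖² = ⟪w, v⟫ - ⟪w, v - w⟫ ≤ 0`. -/
lemma exists_nonpos_coeffs_of_inner_nonpos {T : Finset E}
    (hT : (T : Set E).Pairwise fun a b => ⟪a, b⟫ ≤ 0) {v : E}
    (hv : v ∈ Submodule.span ℝ (T : Set E)) (hvT : ∀ a ∈ T, ⟪v, a⟫ ≤ 0) :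
    ∃ f : E → ℝ, (∀ a ∈ T, f a ≤ 0) ∧ v = ∑ a ∈ T, f a • a := by
  obtain ⟨f, -, rfl⟩ := Submodule.mem_span_finset.mp hv
  set w := ∑ a ∈ T, max (f a) 0 • a
  set u := ∑ a ∈ T, min (f a) 0 • a
  have hwu : ∑ a ∈ T, f a • a = w + u := by
    simp only [w, u, ← Finset.sum_add_distrib, ← add_smul, max_add_min, add_zero]
  have hwv : ⟪w, ∑ a ∈ T, f a • a⟫ ≤ 0 := by
    simp only [w, sum_inner, real_inner_smul_left]
    exact Finset.sum_nonpos fun a ha =>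
      mul_nonpos_of_nonneg_of_nonpos (le_max_right _ _) (real_inner_comm _ a ▸ hvT a ha)
  have hwu_nonneg : 0 ≤ ⟪w, u⟫ := by
    simp only [w, u, sum_inner, inner_sum, real_inner_smul_left, real_inner_smul_right]
    refine Finset.sum_nonneg fun a ha => Finset.sum_nonneg fun b hb => ?_
    rcases eq_or_ne a b with rfl | hab
    · rcases le_total (f a) 0 with h | h <;> simp [h]
    · exact mul_nonneg_of_nonpos_of_nonpos (min_le_right _ _)
        (mul_nonpos_of_nonneg_of_nonpos (le_max_right _ _) (hT hb ha hab.symm))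
  have hw : w = 0 := by
    rw [hwu, inner_add_right] at hwv
    exact real_inner_self_nonpos.mp (by linarith)
  exact ⟨fun a => min (f a) 0, fun a _ => min_le_right _ _, by rw [hwu, hw, zero_add]⟩

lemma inner_nonneg_of_inner_nonpos {T : Finset E}
    (hT : (T : Set E).Pairwise fun a b => ⟪a, b⟫ ≤ 0) {v v' : E}
    (hv : v ∈ Submodule.span ℝ (T : Set E)) (hvT : ∀ a ∈ T, ⟪v, a⟫ ≤ 0)
    (hv'T : ∀ a ∈ T, ⟪v', a⟫ ≤ 0) : 0 ≤ ⟪v, v'⟫ := by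
  obtain ⟨f, hf, rfl⟩ := exists_nonpos_coeffs_of_inner_nonpos hT hv hvT
  simp only [sum_inner, real_inner_smul_left]
  exact Finset.sum_nonneg fun a ha =>
    mul_nonneg_of_nonpos_of_nonpos (hf a ha) (real_inner_comm a v' ▸ hv'T a ha)

lemma inner_pos_of_sub_mem_span {T : Finset E}
    (hT : (T : Set E).Pairwise fun a b => ⟪a, b⟫ ≤ 0) {x y : E}
    (hxy : x - y ∈ Submodule.span ℝ (T : Set E)) (hx : x ∉ Submodule.span ℝ (T : Set E))
    (hxT : ∀ a ∈ T, ⟪x, a⟫ ≤ 0) (hyT : ∀ a ∈ T, ⟪y, a⟫ ≤ 0) : 0 < ⟪x, y⟫ := by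
  set U := Submodule.span ℝ (T : Set E)
  set z := x - U.starProjection x
  have hyz : y - U.starProjection y = z := by
    have h := U.starProjection_eq_self_iff.mpr hxy
    rw [map_sub] at h
    calc y - U.starProjection y
        = x - U.starProjection x - ((x - y) - (U.starProjection x - U.starProjection y)) := by abel
      _ = z := by rw [h, sub_self, sub_zero]
  have hproj : ∀ w, ∀ a ∈ T, ⟪U.starProjection w, a⟫ = ⟪w, a⟫ := fun w a ha => by
    rw [U.inner_starProjection_left_eq_right,
      U.starProjection_eq_self_iff.mpr (Submodule.subset_span ha)]
  have hcone : 0 ≤ ⟪U.starProjection x, U.starProjection y⟫ :=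
    inner_nonneg_of_inner_nonpos hT (U.starProjection_apply_mem x)
      (fun a ha => hproj x a ha ▸ hxT a ha) (fun a ha => hproj y a ha ▸ hyT a ha)
  have hz : z ≠ 0 := fun h => hx (sub_eq_zero.mp h ▸ U.starProjection_apply_mem x)
  have hzU : z ∈ Uᗮ := U.sub_starProjection_mem_orthogonal x
  have hsplit : ⟪x, y⟫ = ⟪U.starProjection x, U.starProjection y⟫ + ⟪z, z⟫ := by
    conv_lhs =>
      rw [← sub_add_cancel x (U.starProjection x), ← sub_add_cancel y (U.starProjection y), hyz]
    rw [inner_add_left, inner_add_right, inner_add_right,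
      U.inner_right_of_mem_orthogonal (U.starProjection_apply_mem x) hzU,
      U.inner_left_of_mem_orthogonal (U.starProjection_apply_mem y) hzU]
    ring
  rw [hsplit]
  exact add_pos_of_nonneg_of_pos hcone (real_inner_self_pos.mpr hz)

lemma inner_sub_pos_of_norm_eq {x y : E} (hnorm : ‖x‖ = ‖y‖) (hne : x ≠ y) : 0 < ⟪x, x - y⟫ := by
  have hsq := real_inner_self_pos.mpr (sub_ne_zero.mpr hne)
  have hsum : ⟪x, x - y⟫ + ⟪y, x - y⟫ = 0 := by
    rw [inner_sub_right, inner_sub_right, real_inner_self_eq_norm_sq, real_inner_self_eq_norm_sq,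
      real_inner_comm x y, hnorm]
    ring
  rw [inner_sub_left] at hsq
  linarith

lemma IsRootSystem.inner_self_pos {Φ : Finset E} (hΦ : IsRootSystem Φ) {γ : E} (hγ : γ ∈ Φ) :
    0 < ⟪γ, γ⟫ :=
  real_inner_self_pos.mpr (hΦ.nonzero γ hγ)

lemma IsRootSystem.sref_mem {Φ : Finset E} (hΦ : IsRootSystem Φ) {a γ : E} (ha : a ∈ Φ)
    (hγ : γ ∈ Φ) : sref a γ ∈ Φ := by
  rw [sref_apply]
  exact hΦ.reflect a ha γ hγ

lemma IsRootSystem.neg_mem_s10 {Φ : Finset E} (hΦ : IsRootSystem Φ) {γ : E} (hγ : γ ∈ Φ) :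
    -γ ∈ Φ := by
  simpa [sref, Submodule.reflection_orthogonalComplement_singleton_eq_neg] using
    hΦ.sref_mem hγ hγ

lemma IsRootSystem.inner_lt_norm_mul_norm {Φ : Finset E} (hΦ : IsRootSystem Φ) {γ δ : E}
    (hγ : γ ∈ Φ) (hδ : δ ∈ Φ) (hne : γ ≠ δ) (hpos : 0 < ⟪γ, δ⟫) : ⟪γ, δ⟫ < ‖γ‖ * ‖δ‖ := by
  refine (real_inner_le_norm γ δ).lt_of_ne fun heq => ?_
  have hnorm : ‖γ‖ * ‖δ‖ ≠ 0 := heq ▸ hpos.ne'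
  obtain ⟨-, r, hr, rfl⟩ :=
    (real_inner_div_norm_mul_norm_eq_one_iff γ δ).mp (by rw [heq, div_self hnorm])
  rcases hΦ.reduced γ hγ r hδ with rfl | rfl
  · exact hne (one_smul ℝ γ).symm
  · norm_num at hr

/-- Both Cartan integers of `γ` and `δ` are positive with product `< 4`, so one of them is `1`,
and the corresponding reflection maps one root to `±(γ - δ)`. -/
lemma IsRootSystem.sub_mem_of_inner_pos_s10 {Φ : Finset E} (hΦ : IsRootSystem Φ) {γ δ : E}
    (hγ : γ ∈ Φ) (hδ : δ ∈ Φ) (hne : γ ≠ δ) (hpos : 0 < ⟪γ, δ⟫) : γ - δ ∈ Φ := by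
  obtain ⟨p, hp⟩ := hΦ.cry δ hδ γ hγ
  obtain ⟨q, hq⟩ := hΦ.cry γ hγ δ hδ
  rw [real_inner_comm γ δ] at hq
  have hγγ := hΦ.inner_self_pos hγ
  have hδδ := hΦ.inner_self_pos hδ
  have hp0 : 0 < p := by exact_mod_cast hp ▸ (by positivity : 0 < 2 * ⟪γ, δ⟫ / ⟪δ, δ⟫)
  have hq0 : 0 < q := by exact_mod_cast hq ▸ (by positivity : 0 < 2 * ⟪γ, δ⟫ / ⟪γ, γ⟫)
  have hpq : p * q < 4 := by
    have hcs := hΦ.inner_lt_norm_mul_norm hγ hδ hne hpos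
    suffices (p : ℝ) * q < 4 by exact_mod_cast this
    rw [← hp, ← hq, div_mul_div_comm, div_lt_iff₀ (by positivity), real_inner_self_eq_norm_sq,
      real_inner_self_eq_norm_sq]
    nlinarith
  have hpq1 : p = 1 ∨ q = 1 := by
    by_contra! h
    nlinarith [lt_of_le_of_ne hp0 h.1.symm, lt_of_le_of_ne hq0 h.2.symm]
  rcases hpq1 with h | h
  · have hr := hΦ.reflect δ hδ γ hγ
    rwa [hp, h, Int.cast_one, one_smul] at hr
  · have hr := hΦ.neg_mem_s10 (hΦ.reflect γ hγ δ hδ)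
    rwa [real_inner_comm γ δ, hq, h, Int.cast_one, one_smul, neg_sub] at hr

namespace IsBase

variable {Φ Δ : Finset E} {c : E → E → ℝ}

lemma coord_eq_of_eq_sum (hB : IsBase Φ Δ c) {x : E} (hx : x ∈ Φ) {g : E → ℝ}
    (h : x = ∑ a ∈ Δ, g a • a) : ∀ a ∈ Δ, c x a = g a :=
  (linearIndepOn_finset_iffₛ (v := id) (s := Δ)).mp hB.indep (c x) g
    (by simpa [← hB.repr x hx] using h)

lemma coord_sub (hB : IsBase Φ Δ c) {x y : E} (hx : x ∈ Φ) (hy : y ∈ Φ) (hxy : x - y ∈ Φ) :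
    ∀ a ∈ Δ, c (x - y) a = c x a - c y a :=
  hB.coord_eq_of_eq_sum hxy <| by
    simp only [sub_smul, Finset.sum_sub_distrib, ← hB.repr x hx, ← hB.repr y hy]

lemma coord_sref (hΦ : IsRootSystem Φ) (hB : IsBase Φ Δ c) {a x : E} (ha : a ∈ Δ)
    (hx : x ∈ Φ) :
    ∀ b ∈ Δ, c (sref a x) b = c x b - if b = a then 2 * ⟪x, a⟫ / ⟪a, a⟫ else 0 :=
  hB.coord_eq_of_eq_sum (hΦ.sref_mem (hB.subset ha) hx) <| by
    simp only [sub_smul, Finset.sum_sub_distrib, ite_smul, zero_smul, Finset.sum_ite_eq',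
      if_pos ha, ← hB.repr x hx, sref_apply]

lemma inner_eq_sum (hB : IsBase Φ Δ c) {x : E} (hx : x ∈ Φ) (y : E) :
    ⟪y, x⟫ = ∑ a ∈ Δ, c x a * ⟪y, a⟫ := by
  conv_lhs => rw [hB.repr x hx]
  simp only [inner_sum, real_inner_smul_right]

lemma inner_nonpos_s10 (hΦ : IsRootSystem Φ) (hB : IsBase Φ Δ c) :
    (Δ : Set E).Pairwise fun a b => ⟪a, b⟫ ≤ 0 := by
  intro a ha b hb hab
  by_contra! hpos
  have hsub := hΦ.sub_mem_of_inner_pos_s10 (hB.subset ha) (hB.subset hb) hab hpos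
  have hsimple : ∀ a ∈ Δ, ∀ b ∈ Δ, c a b = if b = a then 1 else 0 := fun a ha =>
    hB.coord_eq_of_eq_sum (hB.subset ha) (by simp [Finset.sum_ite_eq', ha])
  have hca := hB.coord_sub (hB.subset ha) (hB.subset hb) hsub a ha
  have hcb := hB.coord_sub (hB.subset ha) (hB.subset hb) hsub b hb
  rw [hsimple a ha a ha, hsimple b hb a ha, if_pos rfl, if_neg hab] at hca
  rw [hsimple a ha b hb, hsimple b hb b hb, if_pos rfl, if_neg (Ne.symm hab)] at hcb
  rcases hB.sign _ hsub with h | h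
  · linarith [h b hb]
  · linarith [h a ha]

lemma notMem_span (hB : IsBase Φ Δ c) {x : E} (hx : x ∈ Φ) {T : Finset E} (hT : T ⊆ Δ)
    {a : E} (ha : a ∈ Δ) (haT : a ∉ T) (hxa : c x a ≠ 0) :
    x ∉ Submodule.span ℝ (T : Set E) := by
  intro hxT
  obtain ⟨g, -, hg⟩ := Submodule.mem_span_finset.mp hxT
  refine hxa ((hB.coord_eq_of_eq_sum hx (g := fun b => if b ∈ T then g b else 0) ?_ a ha).trans
    (if_neg haT))
  simp only [ite_smul, zero_smul]
  rw [Finset.sum_ite_mem, Finset.inter_eq_right.mpr hT, hg]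

lemma sum_coord_sref (hΦ : IsRootSystem Φ) (hB : IsBase Φ Δ c) {T : Finset E} (hT : T ⊆ Δ)
    {a x : E} (ha : a ∈ T) (hx : x ∈ Φ) :
    ∑ b ∈ T, c (sref a x) b = ∑ b ∈ T, c x b - 2 * ⟪x, a⟫ / ⟪a, a⟫ := by
  rw [Finset.sum_congr rfl fun b hb => hB.coord_sref hΦ (hT ha) hx b (hT hb),
    Finset.sum_sub_distrib, Finset.sum_ite_eq', if_pos ha]

end IsBase

noncomputable def parabolic (Δ S : Finset E) : Subgroup (E ≃ₗᵢ[ℝ] E) :=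
  Subgroup.closure {g | ∃ a ∈ Δ \ S, g = sref a}

section Level

variable {Φ Δ S : Finset E} {c : E → E → ℝ} {β : E}

lemma sub_mem_span_sdiff (hB : IsBase Φ Δ c) {x y : E} (hx : x ∈ lev Φ c S β)
    (hy : y ∈ lev Φ c S β) : x - y ∈ Submodule.span ℝ ((Δ \ S : Finset E) : Set E) := by
  rw [hB.repr x hx.1, hB.repr y hy.1, ← Finset.sum_sub_distrib]
  refine Submodule.sum_mem _ fun a ha => ?_
  rw [← sub_smul]
  by_cases haS : a ∈ S
  · rw [hx.2 a haS, hy.2 a haS, sub_self, zero_smul]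
    exact zero_mem _
  · exact Submodule.smul_mem _ _ (Submodule.subset_span (by simp [ha, haS]))

lemma sref_mem_lev (hΦ : IsRootSystem Φ) (hB : IsBase Φ Δ c) (hS : S ⊆ Δ) {a x : E}
    (ha : a ∈ Δ \ S) (hx : x ∈ lev Φ c S β) : sref a x ∈ lev Φ c S β := by
  obtain ⟨haΔ, haS⟩ := Finset.mem_sdiff.mp ha
  refine ⟨hΦ.sref_mem (hB.subset haΔ) hx.1, fun b hb => ?_⟩
  rw [hB.coord_sref hΦ haΔ hx.1 b (hS hb), if_neg (ne_of_mem_of_not_mem hb haS), sub_zero,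
    hx.2 b hb]

lemma exists_mem_parabolic_inner_nonpos (hΦ : IsRootSystem Φ) (hB : IsBase Φ Δ c) (hS : S ⊆ Δ)
    {γ : E} (hγ : γ ∈ lev Φ c S β) :
    ∃ w ∈ parabolic Δ S, w γ ∈ lev Φ c S β ∧ ∀ a ∈ Δ \ S, ⟪w γ, a⟫ ≤ 0 := by
  obtain ⟨x, hxO, hmin⟩ :=
    (Φ.filter fun x => x ∈ lev Φ c S β ∧ ∃ w ∈ parabolic Δ S, w γ = x).exists_min_image
      (fun x => ∑ a ∈ Δ \ S, c x a) ⟨γ, Finset.mem_filter.mpr ⟨hγ.1, hγ, 1, one_mem _, rfl⟩⟩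
  obtain ⟨-, hx, w, hw, rfl⟩ := Finset.mem_filter.mp hxO
  refine ⟨w, hw, hx, fun a ha => ?_⟩
  by_contra! hpos
  have hrefl := sref_mem_lev hΦ hB hS ha hx
  have hle := hmin (sref a (w γ)) (Finset.mem_filter.mpr ⟨hrefl.1, hrefl, sref a * w,
    mul_mem (Subgroup.subset_closure ⟨a, ha, rfl⟩) hw, rfl⟩)
  rw [hB.sum_coord_sref hΦ Finset.sdiff_subset ha hx.1] at hle
  have haa := hΦ.inner_self_pos (hB.subset (Finset.mem_sdiff.mp ha).1)
  have : 0 < 2 * ⟪w γ, a⟫ / ⟪a, a⟫ := by positivity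
  linarith

lemma inner_sub_nonpos_of_coord_nonneg (hB : IsBase Φ Δ c) {x y : E} (hx : x ∈ lev Φ c S β)
    (hy : y ∈ lev Φ c S β) (hxd : ∀ a ∈ Δ \ S, ⟪x, a⟫ ≤ 0) (hxy : x - y ∈ Φ)
    (hcoord : ∀ a ∈ Δ, 0 ≤ c (x - y) a) : ⟪x, x - y⟫ ≤ 0 := by
  rw [hB.inner_eq_sum hxy]
  refine Finset.sum_nonpos fun a ha => ?_
  by_cases haS : a ∈ S
  · rw [hB.coord_sub hx.1 hy.1 hxy a ha, hx.2 a haS, hy.2 a haS, sub_self, zero_mul]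
  · exact mul_nonpos_of_nonneg_of_nonpos (hcoord a ha) (hxd a (Finset.mem_sdiff.mpr ⟨ha, haS⟩))

lemma eq_of_inner_nonpos (hΦ : IsRootSystem Φ) (hB : IsBase Φ Δ c) (hS : S ⊆ Δ)
    (hsupp : ∃ a ∈ S, c β a ≠ 0) {x y : E} (hx : x ∈ lev Φ c S β) (hy : y ∈ lev Φ c S β)
    (hnorm : ‖x‖ = ‖y‖) (hxd : ∀ a ∈ Δ \ S, ⟪x, a⟫ ≤ 0) (hyd : ∀ a ∈ Δ \ S, ⟪y, a⟫ ≤ 0) :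
    x = y := by
  by_contra hne
  obtain ⟨a₀, ha₀S, ha₀⟩ := hsupp
  have hx_span := hB.notMem_span hx.1 Finset.sdiff_subset (hS ha₀S)
    (fun h => (Finset.mem_sdiff.mp h).2 ha₀S) (hx.2 a₀ ha₀S ▸ ha₀)
  have hobtuse :=
    (hB.inner_nonpos_s10 hΦ).mono (Finset.coe_subset.mpr (Finset.sdiff_subset (t := S)))
  have hpos := inner_pos_of_sub_mem_span hobtuse (sub_mem_span_sdiff hB hx hy) hx_span hxd hyd
  have hxy := hΦ.sub_mem_of_inner_pos_s10 hx.1 hy.1 hne hpos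
  have hyx := hΦ.sub_mem_of_inner_pos_s10 hy.1 hx.1 (Ne.symm hne) (real_inner_comm x y ▸ hpos)
  rcases hB.sign _ hxy with h | h
  · exact (inner_sub_nonpos_of_coord_nonneg hB hx hy hxd hxy h).not_gt
      (inner_sub_pos_of_norm_eq hnorm hne)
  · refine (inner_sub_nonpos_of_coord_nonneg hB hy hx hyd hyx fun a ha => ?_).not_gt
      (inner_sub_pos_of_norm_eq hnorm.symm (Ne.symm hne))
    rw [hB.coord_sub hy.1 hx.1 hyx a ha]
    linarith [h a ha, hB.coord_sub hx.1 hy.1 hxy a ha]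

lemma exists_mem_parabolic_apply_eq (hΦ : IsRootSystem Φ) (hB : IsBase Φ Δ c) (hS : S ⊆ Δ)
    (hsupp : ∃ a ∈ S, c β a ≠ 0) {γ γ' : E} (hγ : γ ∈ lev Φ c S β) (hγ' : γ' ∈ lev Φ c S β)
    (hnorm : ‖γ‖ = ‖γ'‖) : ∃ w ∈ parabolic Δ S, w γ = γ' := by
  obtain ⟨w, hw, hwγ, hwd⟩ := exists_mem_parabolic_inner_nonpos hΦ hB hS hγ
  obtain ⟨w', hw', hwγ', hwd'⟩ := exists_mem_parabolic_inner_nonpos hΦ hB hS hγ'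
  have heq := eq_of_inner_nonpos hΦ hB hS hsupp hwγ hwγ'
    (by simp only [LinearIsometryEquiv.norm_map, hnorm]) hwd hwd'
  refine ⟨w'⁻¹ * w, mul_mem (inv_mem hw') hw, ?_⟩
  rw [LinearIsometryEquiv.coe_mul, Function.comp_apply, heq, LinearIsometryEquiv.coe_inv,
    LinearIsometryEquiv.symm_apply_apply]

end Level

theorem stmt10_general (Φ Δ : Finset E) (c : E → E → ℝ)
    (hΦ : IsRootSystem Φ) (hB : IsBase Φ Δ c)
    (S : Finset E) (hS : S ⊆ Δ) (β : E)
    (hsupp : ∃ a ∈ S, c β a ≠ 0) :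
    (∀ γ ∈ lev Φ c S β, ∀ γ' ∈ lev Φ c S β,
      (∀ δ ∈ Φ, ‖δ‖ ≤ ‖γ‖) → (∀ δ ∈ Φ, ‖δ‖ ≤ ‖γ'‖) →
      ∃ w ∈ Subgroup.closure {g : E ≃ₗᵢ[ℝ] E | ∃ a ∈ Δ \ S, g = sref a}, w γ = γ') ∧
    (∀ γ ∈ lev Φ c S β, ∀ γ' ∈ lev Φ c S β,
      (∀ δ ∈ Φ, ‖γ‖ ≤ ‖δ‖) → (∀ δ ∈ Φ, ‖γ'‖ ≤ ‖δ‖) →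
      ∃ w ∈ Subgroup.closure {g : E ≃ₗᵢ[ℝ] E | ∃ a ∈ Δ \ S, g = sref a}, w γ = γ') := by
  exact ⟨fun γ hγ γ' hγ' hl hl' => exists_mem_parabolic_apply_eq hΦ hB hS hsupp hγ hγ'
      ((hl' γ hγ.1).antisymm (hl γ' hγ'.1)),
    fun γ hγ γ' hγ' hs hs' => exists_mem_parabolic_apply_eq hΦ hB hS hsupp hγ hγ'
      ((hs γ' hγ'.1).antisymm (hs' γ hγ.1))⟩

/-- Oshima's Lemma: the parabolic subgroup `W⟨Π \ S⟩` acts transitively on the long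
roots of `Φ_{S,β}` and transitively on the short roots of `Φ_{S,β}`. -/
theorem stmt10 (Φ Δ : Finset E) (c : E → E → ℝ)
    (hΦ : IsRootSystem Φ) (hB : IsBase Φ Δ c) (hirr : IsIrredSys Φ)
    (S : Finset E) (hS : S ⊆ Δ) (β : E) (hβ : β ∈ Φ)
    (hβpos : ∀ a ∈ Δ, 0 ≤ c β a) (hsupp : ∃ a ∈ S, c β a ≠ 0) :
    (∀ γ ∈ lev Φ c S β, ∀ γ' ∈ lev Φ c S β,
      (∀ δ ∈ Φ, ‖δ‖ ≤ ‖γ‖) → (∀ δ ∈ Φ, ‖δ‖ ≤ ‖γ'‖) →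
      ∃ w ∈ Subgroup.closure {g : E ≃ₗᵢ[ℝ] E | ∃ a ∈ Δ \ S, g = sref a}, w γ = γ') ∧
    (∀ γ ∈ lev Φ c S β, ∀ γ' ∈ lev Φ c S β,
      (∀ δ ∈ Φ, ‖γ‖ ≤ ‖δ‖) → (∀ δ ∈ Φ, ‖γ'‖ ≤ ‖δ‖) →
      ∃ w ∈ Subgroup.closure {g : E ≃ₗᵢ[ℝ] E | ∃ a ∈ Δ \ S, g = sref a}, w γ = γ') :=
  stmt10_general Φ Δ c hΦ hB S hS β hsupp
end
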